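/- arXiv:1605.08903 — 5 statements merged into one kernel-verified Lean document; each statement's English description precedes it below -/
import Mathlib

section
/- For positive integers m, n with n ≥ m and m ≥ 2, the maximum over x ∈ [0,1] of x^m((1-x)/(1+x))^n is strictly less than (m/(4n))^m. -/
/-!
Since `log ((1 + x) / (1 - x)) = 2 (x + x³/3 + x⁵/5 + ⋯) ≥ 2x`, on `[0, 1]` we have
`(1 - x) / (1 + x) ≤ e^{-2x}`, so the function is at most `x^m e^{-2nx}`. The maximum of
`x^m e^{-ax}` is `(m / (e a))^m`, and `e > 2` turns `(m / (2 e n))^m` into the strict bound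
`(m / (4n))^m`.
-/

open Real Set

theorem two_mul_le_log_one_add_sub_log_one_sub {x : ℝ} (hx0 : 0 ≤ x) (hx1 : x < 1) :
    2 * x ≤ log (1 + x) - log (1 - x) := by
  have hsum := hasSum_log_sub_log_of_abs_lt_one (abs_lt.2 ⟨by linarith, hx1⟩)
  simpa using le_hasSum hsum 0 fun k _ => by positivity

theorem one_sub_div_one_add_le_exp_neg {x : ℝ} (hx : 0 ≤ x) :
    (1 - x) / (1 + x) ≤ exp (-(2 * x)) := by
  rcases lt_or_ge x 1 with hx1 | hx1
  · calc (1 - x) / (1 + x) = exp (-(log (1 + x) - log (1 - x))) := by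
          rw [neg_sub, exp_sub, exp_log (by linarith), exp_log (by linarith)]
      _ ≤ exp (-(2 * x)) :=
          exp_le_exp.2 (neg_le_neg (two_mul_le_log_one_add_sub_log_one_sub hx hx1))
  · exact (div_nonpos_of_nonpos_of_nonneg (by linarith) (by linarith)).trans (exp_pos _).le

theorem pow_mul_exp_neg_mul_le {m : ℕ} (hm : m ≠ 0) {a x : ℝ} (ha : 0 < a) (hx : 0 ≤ x) :
    x ^ m * exp (-(a * x)) ≤ (m / a * exp (-1)) ^ m := by
  have hmR : (0 : ℝ) < m := by positivity
  have hroot : x * exp (-(a * x / m)) ≤ m / a * exp (-1) :=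
    calc x * exp (-(a * x / m)) = m / a * (a * x / m * exp (-(a * x / m))) := by
          field_simp
      _ ≤ m / a * exp (-1) :=
          mul_le_mul_of_nonneg_left (mul_exp_neg_le_exp_neg_one _) (by positivity)
  calc x ^ m * exp (-(a * x)) = (x * exp (-(a * x / m))) ^ m := by
        rw [mul_pow, ← exp_nat_mul]
        field_simp
    _ ≤ (m / a * exp (-1)) ^ m := pow_le_pow_left₀ (by positivity) hroot m

theorem pow_mul_one_sub_div_one_add_pow_le {m n : ℕ} (hm : m ≠ 0) (hn : n ≠ 0) {x : ℝ}
    (hx : x ∈ Icc (0 : ℝ) 1) :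
    x ^ m * ((1 - x) / (1 + x)) ^ n ≤ (m / (2 * n) * exp (-1)) ^ m := by
  have hfrac : ((1 - x) / (1 + x)) ^ n ≤ exp (-(2 * n * x)) := by
    calc ((1 - x) / (1 + x)) ^ n ≤ exp (-(2 * x)) ^ n :=
          pow_le_pow_left₀ (div_nonneg (by linarith [hx.2]) (by linarith [hx.1]))
            (one_sub_div_one_add_le_exp_neg hx.1) n
      _ = exp (-(2 * n * x)) := by rw [← exp_nat_mul]; ring_nf
  calc x ^ m * ((1 - x) / (1 + x)) ^ n ≤ x ^ m * exp (-(2 * n * x)) :=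
        mul_le_mul_of_nonneg_left hfrac (pow_nonneg hx.1 m)
    _ ≤ (m / (2 * n) * exp (-1)) ^ m := pow_mul_exp_neg_mul_le hm (by positivity) hx.1

/-- For integers m ≥ 2, n ≥ m, the maximum over x ∈ [0,1] of
x^m·((1-x)/(1+x))^n is strictly less than (m/(4n))^m. -/
theorem max_critical_value_lt (m n : ℕ) (hm : 2 ≤ m) (hmn : m ≤ n) :
    sSup ((fun x : ℝ => x ^ m * ((1 - x) / (1 + x)) ^ n) '' Set.Icc 0 1)
      < ((m : ℝ) / (4 * n)) ^ m := by
  have hm0 : m ≠ 0 := by omega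
  have hn0 : n ≠ 0 := by omega
  have hcont : ContinuousOn (fun x : ℝ => x ^ m * ((1 - x) / (1 + x)) ^ n) (Icc 0 1) :=
    by fun_prop (disch := intro x (hx : x ∈ Icc (0 : ℝ) 1); linarith [hx.1])
  rw [isCompact_Icc.sSup_lt_iff_of_continuous (nonempty_Icc.2 zero_le_one) hcont]
  intro x hx
  have hbase : (m : ℝ) / (2 * n) * exp (-1) < m / (4 * n) := by
    calc (m : ℝ) / (2 * n) * exp (-1) < m / (2 * n) * (1 / 2) :=
          mul_lt_mul_of_pos_left exp_neg_one_lt_half (by positivity)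
      _ = m / (4 * n) := by ring
  exact (pow_mul_one_sub_div_one_add_pow_le hm0 hn0 hx).trans_lt
    (pow_lt_pow_left₀ hbase (by positivity) hm0)
end

section
/- For positive integers m ≥ 2, n ≥ m, set μ = m/(4n) and suppose μ^{m-1} ≤ 1/4. Then ((1+μ^m)/(1-μ^m))^n ≤ exp((23/45)·m·μ^{m-1}) < (exp(μ^{m-1}))^m. -/
/-! From the series `log ((1 + x) / (1 - x)) = 2 ∑ x ^ (2k+1) / (2k+1)`, bounding every term after
the first by a geometric one gives `(1 + x) / (1 - x) ≤ exp (2x (1 + 1/45))` for `0 ≤ x ≤ 1/4`.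
Apply this to `x = μ ^ m = (m / (4n)) μ ^ (m - 1)` and raise to the `n`-th power: the exponent
becomes `2 (46/45) (m/4) μ ^ (m - 1) = (23/45) m μ ^ (m - 1)`, and `23/45 < 1` gives the strict
comparison with `exp (μ ^ (m - 1)) ^ m`. -/

open Real

lemma Real.log_one_add_sub_log_one_sub_le {x : ℝ} (hx₀ : 0 ≤ x) (hx₁ : x < 1) :
    log (1 + x) - log (1 - x) ≤ 2 * x + 2 / 3 * x ^ 3 / (1 - x ^ 2) := by
  have hx2 : x ^ 2 < 1 := by nlinarith
  have hgeom : HasSum (fun k : ℕ => 2 / 3 * x * (x ^ 2) ^ k + if k = 0 then 4 / 3 * x else 0)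
      (2 / 3 * x * (1 - x ^ 2)⁻¹ + 4 / 3 * x) :=
    ((hasSum_geometric_of_lt_one (by positivity) hx2).mul_left _).add (hasSum_ite_eq 0 _)
  have hsum := hasSum_le (fun k => ?_) (hasSum_log_sub_log_of_abs_lt_one
    (by rwa [abs_of_nonneg hx₀])) hgeom
  · have hx2' : 0 < 1 - x ^ 2 := by linarith
    calc log (1 + x) - log (1 - x) ≤ _ := hsum
      _ = _ := by field_simp; ring
  · rcases Nat.eq_zero_or_pos k with rfl | hk
    · norm_num; linarith
    · have hk3 : (3 : ℝ) ≤ 2 * k + 1 := by exact_mod_cast (by omega : 3 ≤ 2 * k + 1)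
      have hcoef : 1 / (2 * k + 1 : ℝ) ≤ 1 / 3 := one_div_le_one_div_of_le (by norm_num) hk3
      rw [if_neg hk.ne', add_zero, ← pow_mul, mul_assoc (2 / 3) x, ← pow_succ']
      nlinarith [pow_nonneg hx₀ (2 * k + 1)]

lemma one_add_div_one_sub_le_exp {x : ℝ} (hx₀ : 0 ≤ x) (hx₁ : x ≤ 1 / 4) :
    (1 + x) / (1 - x) ≤ exp (2 * x * (1 + 1 / 45)) := by
  have hlog := Real.log_one_add_sub_log_one_sub_le hx₀ (by linarith)
  have htail : 2 / 3 * x ^ 3 / (1 - x ^ 2) ≤ 2 * x / 45 := by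
    rw [div_le_iff₀ (by nlinarith)]
    nlinarith [mul_nonneg hx₀ (mul_nonneg hx₀ hx₀)]
  rw [← exp_log (by apply div_pos <;> linarith : 0 < (1 + x) / (1 - x)),
    log_div (by linarith) (by linarith)]
  gcongr
  linarith

/-- For integers m ≥ 2, n ≥ m, with μ = m/(4n) and μ^(m-1) ≤ 1/4,
((1+μ^m)/(1-μ^m))^n ≤ exp((23/45)·m·μ^(m-1)) < (exp(μ^(m-1)))^m. -/
theorem mu_power_ineq (m n : ℕ) (hm : 2 ≤ m) (hmn : m ≤ n)
    (μ : ℝ) (hμ : μ = (m : ℝ) / (4 * n)) (hμ' : μ ^ (m - 1) ≤ 1 / 4) :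
    ((1 + μ ^ m) / (1 - μ ^ m)) ^ n ≤ Real.exp ((23 / 45) * m * μ ^ (m - 1)) ∧
    Real.exp ((23 / 45) * m * μ ^ (m - 1)) < (Real.exp (μ ^ (m - 1))) ^ m := by
  have hmn' : (m : ℝ) ≤ n := by exact_mod_cast hmn
  have hm' : (2 : ℝ) ≤ m := by exact_mod_cast hm
  have hn : (0 : ℝ) < n := by linarith
  have hμ₀ : 0 < μ := by rw [hμ]; positivity
  have hμ₁ : μ ≤ 1 / 4 := by
    rw [hμ, div_le_iff₀ (by positivity)]
    linarith
  have hsplit : μ ^ m = μ * μ ^ (m - 1) := by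
    rw [← pow_succ']
    congr 1
    omega
  have hx : μ ^ m ≤ 1 / 4 := by
    rw [hsplit]
    nlinarith [pow_pos hμ₀ (m - 1)]
  have hnμ : n * μ = m / 4 := by rw [hμ]; field_simp
  have hexponent : n * (2 * μ ^ m * (1 + 1 / 45)) = 23 / 45 * m * μ ^ (m - 1) := by
    rw [hsplit]
    linear_combination 92 / 45 * μ ^ (m - 1) * hnμ
  constructor
  · calc ((1 + μ ^ m) / (1 - μ ^ m)) ^ n ≤ exp (2 * μ ^ m * (1 + 1 / 45)) ^ n := by
          gcongr
          · apply div_nonneg <;> linarith [pow_pos hμ₀ m]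
          · exact one_add_div_one_sub_le_exp (pow_pos hμ₀ m).le hx
      _ = exp (23 / 45 * m * μ ^ (m - 1)) := by rw [← exp_nat_mul, hexponent]
  · rw [← exp_nat_mul, exp_lt_exp]
    nlinarith [pow_pos hμ₀ (m - 1)]
end

section
/- For every m ≥ 2 and n ≥ 1 there exists r ∈ (0,1) such that for all t with 0 < |t| ≤ 1, the image under f_t(z) = t z^m((1-z)/(1+z))^n of the closed disc {|z| ≤ r|t|} together with the segment [0,1] is contained in the open disc {|z| < r|t|}, and |f_t(β)| > r|t| where β = -n/m - sqrt(1+(n/m)^2). -/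
/-!
Take `r = 2 / (7n)`. On the disc `‖z‖ ≤ r‖t‖ ≤ r` the factor `|(1 - z)/(1 + z)|` is at most
`(1 + r)/(1 - r)`, and Bernoulli's inequality gives `r ((1 + r)/(1 - r))^n < 1`; since `m ≥ 2`, the
factor `‖z‖^m ≤ r · r‖t‖` then pushes the image strictly inside. On `[0, 1]` one has
`x^m ((1 - x)/(1 + x))^n ≤ x^2 (1 - x)^n ≤ 1/(4n) < r`. Finally `β < -1`, so `|β| > 1` and
`|1 - β| > |1 + β|`, whence `|f_t(β)| ≥ |t| > r|t|`.
-/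

open Set

theorem pow_mul_one_sub_le {u : ℝ} (h0 : 0 ≤ u) (h1 : u ≤ 1) (j : ℕ) :
    u ^ j * (1 - u) ≤ 1 / (j + 1) := by
  -- `(1 - u) ∑_{i ≤ j} u^i = 1 - u^(j+1) ≤ 1`, and each of the `j + 1` terms is at least `u^j`.
  rw [le_div_iff₀ (by positivity)]
  have hsum : (j + 1 : ℝ) * u ^ j ≤ ∑ i ∈ Finset.range (j + 1), u ^ i := by
    simpa using Finset.card_nsmul_le_sum (Finset.range (j + 1)) (u ^ ·) (u ^ j)
      fun i hi => pow_le_pow_of_le_one h0 h1 (Nat.le_of_lt_succ (Finset.mem_range.mp hi))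
  have hgeom := geom_sum_mul_neg u (j + 1)
  nlinarith [mul_le_mul_of_nonneg_right hsum (sub_nonneg.mpr h1), pow_nonneg h0 (j + 1)]

theorem sq_mul_one_sub_pow_le {x : ℝ} (h0 : 0 ≤ x) (h1 : x ≤ 1) {n : ℕ} (hn : 1 ≤ n) :
    x ^ 2 * (1 - x) ^ n ≤ 1 / (4 * n) := by
  obtain ⟨k, rfl⟩ := Nat.exists_eq_add_of_le' hn
  have hquad : x * (1 - x) ≤ 1 / 4 := by nlinarith [sq_nonneg (x - 1 / 2)]
  have hk : (1 - x) ^ k * (1 - (1 - x)) ≤ 1 / (k + 1) :=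
    pow_mul_one_sub_le (by linarith) (by linarith) k
  rw [sub_sub_cancel] at hk
  calc x ^ 2 * (1 - x) ^ (k + 1) = (x * (1 - x)) * ((1 - x) ^ k * x) := by ring
    _ ≤ 1 / 4 * (1 / (k + 1)) :=
        mul_le_mul hquad hk (mul_nonneg (pow_nonneg (by linarith) k) h0) (by norm_num)
    _ = 1 / (4 * ((k + 1 : ℕ) : ℝ)) := by push_cast; field_simp

theorem abs_pow_mul_one_sub_div_one_add_pow_le {x : ℝ} (hx : x ∈ Icc 0 1) {m n : ℕ} (hm : 2 ≤ m)
    (hn : 1 ≤ n) :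
    |x ^ m * ((1 - x) / (1 + x)) ^ n| ≤ 1 / (4 * n) := by
  obtain ⟨h0, h1⟩ := hx
  have hq0 : 0 ≤ (1 - x) / (1 + x) := div_nonneg (by linarith) (by linarith)
  rw [abs_of_nonneg (by positivity)]
  calc x ^ m * ((1 - x) / (1 + x)) ^ n ≤ x ^ 2 * (1 - x) ^ n :=
        mul_le_mul (pow_le_pow_of_le_one h0 h1 hm)
          (pow_le_pow_left₀ hq0 (div_le_self (by linarith) (by linarith)) n)
          (by positivity) (by positivity)
    _ ≤ 1 / (4 * n) := sq_mul_one_sub_pow_le h0 h1 hn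

theorem one_le_abs_pow_mul_one_sub_div_one_add_pow {b : ℝ} (hb : b < -1) (m n : ℕ) :
    1 ≤ |b ^ m * ((1 - b) / (1 + b)) ^ n| := by
  have hratio : 1 ≤ |(1 - b) / (1 + b)| := by
    rw [abs_div, abs_of_pos (by linarith : 0 < 1 - b), abs_of_neg (by linarith : 1 + b < 0),
      one_le_div (by linarith)]
    linarith
  rw [abs_mul, abs_pow, abs_pow]
  exact one_le_mul_of_one_le_of_one_le (one_le_pow₀ (by rw [abs_of_neg] <;> linarith))
    (one_le_pow₀ hratio)

theorem neg_sub_sqrt_one_add_sq_lt_neg_one {a : ℝ} (ha : 0 < a) : -a - √(1 + a ^ 2) < -1 := by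
  have : 1 ≤ √(1 + a ^ 2) := Real.one_le_sqrt.mpr (by nlinarith)
  linarith

theorem norm_one_sub_div_one_add_le {𝕜 : Type*} [NormedDivisionRing 𝕜] [NormOneClass 𝕜]
    {z : 𝕜} {ρ : ℝ} (hz : ‖z‖ ≤ ρ) (hρ : ρ < 1) :
    ‖(1 - z) / (1 + z)‖ ≤ (1 + ρ) / (1 - ρ) := by
  have hnum : ‖1 - z‖ ≤ 1 + ρ := by linarith [norm_sub_le (1 : 𝕜) z, norm_one (α := 𝕜)]
  have hden : 1 - ρ ≤ ‖1 + z‖ := by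
    linarith [norm_sub_le_norm_add (1 : 𝕜) z, norm_one (α := 𝕜)]
  rw [norm_div]
  exact div_le_div₀ (by linarith [norm_nonneg z]) hnum (by linarith) hden

theorem mul_one_add_div_one_sub_pow_lt_one {r : ℝ} (h0 : 0 ≤ r) {n : ℕ}
    (h : r + 2 * n * r < 1) : r * ((1 + r) / (1 - r)) ^ n < 1 := by
  have hr1 : 0 < 1 - r := by nlinarith
  have hbern : 1 - 2 * n * r ≤ (1 - r) ^ n * (1 - r) ^ n := by
    rw [← pow_add, ← two_mul, sub_eq_add_neg (1 : ℝ) r]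
    have := one_add_mul_le_pow (a := -r) (by linarith) (2 * n)
    push_cast at this
    linarith
  have hprod : (1 + r) ^ n * (1 - r) ^ n ≤ 1 := by
    rw [← mul_pow]
    exact pow_le_one₀ (by nlinarith) (by nlinarith)
  rw [div_pow, ← mul_div_assoc, div_lt_one (pow_pos hr1 n)]
  refine lt_of_mul_lt_mul_right ?_ (pow_pos hr1 n).le
  nlinarith

theorem norm_mul_pow_mul_one_sub_div_one_add_pow_lt {t z : ℂ} {r : ℝ} {m n : ℕ} (hm : 2 ≤ m)
    (hr0 : 0 < r) (hr1 : r < 1) (hK : r * ((1 + r) / (1 - r)) ^ n < 1)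
    (ht0 : 0 < ‖t‖) (ht1 : ‖t‖ ≤ 1) (hz : ‖z‖ ≤ r * ‖t‖) :
    ‖t * z ^ m * ((1 - z) / (1 + z)) ^ n‖ < r * ‖t‖ := by
  have hzr : ‖z‖ ≤ r := hz.trans (mul_le_of_le_one_right hr0.le ht1)
  have hzm : ‖z‖ ^ m ≤ r * (r * ‖t‖) :=
    (pow_le_pow_of_le_one (norm_nonneg z) (hzr.trans hr1.le) hm).trans
      (by rw [sq]; exact mul_le_mul hzr hz (norm_nonneg z) hr0.le)
  have hq := norm_one_sub_div_one_add_le hzr hr1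
  rw [norm_mul, norm_mul, norm_pow, norm_pow]
  calc ‖t‖ * ‖z‖ ^ m * ‖(1 - z) / (1 + z)‖ ^ n
      ≤ 1 * (r * (r * ‖t‖)) * ((1 + r) / (1 - r)) ^ n := by gcongr
    _ = (r * ((1 + r) / (1 - r)) ^ n) * (r * ‖t‖) := by ring
    _ < r * ‖t‖ := mul_lt_of_lt_one_left (by positivity) hK

theorem norm_mul_ofReal_pow_mul_one_sub_div_one_add_pow (t : ℂ) (x : ℝ) (m n : ℕ) :
    ‖t * (x : ℂ) ^ m * ((1 - x) / (1 + x)) ^ n‖ = ‖t‖ * |x ^ m * ((1 - x) / (1 + x)) ^ n| := by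
  rw [← Real.norm_eq_abs, ← Complex.norm_real, ← norm_mul]
  push_cast
  ring_nf

/-- Lemma 1 (Trennung): for every m ≥ 2, n ≥ 1 there is r ∈ (0,1) such that
for 0 < |t| ≤ 1 the map f_t(z) = t·z^m((1-z)/(1+z))^n maps the closed disc
{|z| ≤ r|t|} and the segment [0,1] into the open disc {|z| < r|t|},
while |f_t(β)| > r|t| for the free critical point β. -/
theorem trennung (m n : ℕ) (hm : 2 ≤ m) (hn : 1 ≤ n) :
    ∃ r : ℝ, 0 < r ∧ r < 1 ∧
      ∀ t : ℂ, 0 < ‖t‖ → ‖t‖ ≤ 1 →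
        (∀ z : ℂ,
          (‖z‖ ≤ r * ‖t‖ ∨
            ∃ x : ℝ, x ∈ Set.Icc (0 : ℝ) 1 ∧ z = (x : ℂ)) →
          ‖t * z ^ m * ((1 - z) / (1 + z)) ^ n‖ < r * ‖t‖) ∧
        (let β : ℂ := ((-(n / m : ℝ) - Real.sqrt (1 + ((n : ℝ) / m) ^ 2) : ℝ) : ℂ)
         ‖t * β ^ m * ((1 - β) / (1 + β)) ^ n‖ > r * ‖t‖) := by
  have hn1 : (1 : ℝ) ≤ n := by exact_mod_cast hn
  set r : ℝ := 2 / (7 * n) with hr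
  have hr0 : 0 < r := by positivity
  have hnr : n * r = 2 / 7 := by rw [hr]; field_simp
  have hr1 : r < 1 := by nlinarith
  refine ⟨r, hr0, hr1, fun t ht0 ht1 => ⟨?_, ?_⟩⟩
  · rintro z (hz | ⟨x, hx, rfl⟩)
    · exact norm_mul_pow_mul_one_sub_div_one_add_pow_lt hm hr0 hr1
        (mul_one_add_div_one_sub_pow_lt_one hr0.le (by nlinarith)) ht0 ht1 hz
    · have hseg : 1 / (4 * n) < r := by
        rw [hr, div_lt_div_iff₀ (by positivity) (by positivity)]; linarith
      rw [norm_mul_ofReal_pow_mul_one_sub_div_one_add_pow, mul_comm r]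
      exact mul_lt_mul_of_pos_left
        ((abs_pow_mul_one_sub_div_one_add_pow_le hx hm hn).trans_lt hseg) ht0
  · have hβ := neg_sub_sqrt_one_add_sq_lt_neg_one
      (div_pos (by positivity : (0 : ℝ) < n) (by positivity : (0 : ℝ) < m))
    dsimp only
    rw [norm_mul_ofReal_pow_mul_one_sub_div_one_add_pow, gt_iff_lt, mul_comm r]
    calc ‖t‖ * r < ‖t‖ * 1 := mul_lt_mul_of_pos_left hr1 ht0
      _ ≤ ‖t‖ * |_| :=
        mul_le_mul_of_nonneg_left (one_le_abs_pow_mul_one_sub_div_one_add_pow hβ m n) ht0.le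
end

section
/- The roots λ of 2tλ^2 + (1 - 10t + t^2)λ + (-2 + 14t - 2t^2) = 0 are exactly the multipliers of the finite fixed points z ≠ 0 of f_t(z) = t z^2 (1-z)/(1+z); i.e., this quadratic in λ is (up to a nonzero factor) the resultant with respect to z of f_t(z) - z = 0 (excluding z = 0) and f_t'(z) - λ = 0. -/
/-!
The finite fixed points z ≠ 0 of `f_t` are the roots `z₁, z₂` of `t z² + (1 - t) z + 1`, so by
Vieta `t (z₁ + z₂) = t - 1` and `t z₁ z₂ = 1`. Modulo this quadratic, `t (1 + z)² (λ - f_t'(z))`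
reduces to a linear form `A(λ) z + B(λ)`, and the product of its values at `z₁, z₂` is a symmetric
function of the roots, which Vieta turns into `2 t² Q(λ)` with `Q` the quadratic of the statement.
Since `(1 + z₁)(1 + z₂) = 2`, this gives `Q(λ) = 2 t (λ - f_t'(z₁)) (λ - f_t'(z₂))`.
-/

section Algebra

variable {K : Type*} [Field K]

def multiplier (t z : K) : K := 2 * t * z * (1 - z - z ^ 2) / (1 + z) ^ 2

theorem fixedPointQuadratic_eq_mul_of_vieta {t z₁ z₂ : K} (hsum : t * (z₁ + z₂) = t - 1)
    (hprod : t * (z₁ * z₂) = 1) (z : K) :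
    t * z ^ 2 + (1 - t) * z + 1 = t * (z - z₁) * (z - z₂) := by
  linear_combination z * hsum - hprod

theorem exists_vieta_roots_fixedPointQuadratic [IsAlgClosed K] [NeZero (2 : K)] {t : K} (ht : t ≠ 0) :
    ∃ z₁ z₂ : K, t * (z₁ + z₂) = t - 1 ∧ t * (z₁ * z₂) = 1 := by
  obtain ⟨s, hs⟩ := IsAlgClosed.exists_eq_mul_self (discrim t (1 - t) 1)
  refine ⟨(-(1 - t) + s) / (2 * t), (-(1 - t) - s) / (2 * t), ?_, ?_⟩
  · field_simp
    ring
  · rw [discrim] at hs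
    field_simp
    linear_combination hs

theorem one_add_ne_zero_of_fixedPointQuadratic [NeZero (2 : K)] {t z : K} (ht : t ≠ 0)
    (hP : t * z ^ 2 + (1 - t) * z + 1 = 0) : 1 + z ≠ 0 := by
  intro hz
  have h2t : 2 * t = 0 := by linear_combination hP - (t * z + 1 - 2 * t) * hz
  exact mul_ne_zero two_ne_zero ht h2t

theorem isFixedPt_iff_fixedPointQuadratic [NeZero (2 : K)] {t : K} (ht : t ≠ 0) (z : K) :
    z ≠ 0 ∧ z ≠ -1 ∧ t * z ^ 2 * (1 - z) / (1 + z) = z ↔ t * z ^ 2 + (1 - t) * z + 1 = 0 := by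
  have hfactor : t * z ^ 2 * (1 - z) - z * (1 + z) = -z * (t * z ^ 2 + (1 - t) * z + 1) := by
    ring
  constructor
  · rintro ⟨hz₀, hz₁, hfix⟩
    rw [div_eq_iff (fun h => hz₁ (by linear_combination h)), ← sub_eq_zero, hfactor] at hfix
    exact (mul_eq_zero.1 hfix).resolve_left (neg_ne_zero.2 hz₀)
  · intro hP
    have hz₁ := one_add_ne_zero_of_fixedPointQuadratic ht hP
    refine ⟨by rintro rfl; simp at hP, fun h => hz₁ (by rw [h]; ring), ?_⟩
    rw [div_eq_iff hz₁, ← sub_eq_zero, hfactor, hP, mul_zero]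

theorem mul_sub_multiplier {t z : K} (hP : t * z ^ 2 + (1 - t) * z + 1 = 0) (hz : 1 + z ≠ 0)
    (lam : K) :
    t * (1 + z) ^ 2 * (lam - multiplier t z)
      = ((3 * t - 1) * lam + 2 * t ^ 2 - 8 * t + 2) * z + ((t - 1) * lam - 4 * t + 2) := by
  rw [multiplier]
  field_simp
  linear_combination (lam + 2 * t * z + 4 * t - 2) * hP

theorem mul_linear_mul_linear_of_vieta {t z₁ z₂ : K} (hsum : t * (z₁ + z₂) = t - 1)
    (hprod : t * (z₁ * z₂) = 1) (A B : K) :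
    t * ((A * z₁ + B) * (A * z₂ + B)) = A ^ 2 + (t - 1) * A * B + t * B ^ 2 := by
  linear_combination A ^ 2 * hprod + A * B * hsum

theorem multiplierQuadratic_eq_of_vieta [NeZero (2 : K)] {t z₁ z₂ : K} (ht : t ≠ 0)
    (hsum : t * (z₁ + z₂) = t - 1) (hprod : t * (z₁ * z₂) = 1) (lam : K) :
    2 * t * lam ^ 2 + (1 - 10 * t + t ^ 2) * lam + (-2 + 14 * t - 2 * t ^ 2)
      = 2 * t * (lam - multiplier t z₁) * (lam - multiplier t z₂) := by
  have hP₁ : t * z₁ ^ 2 + (1 - t) * z₁ + 1 = 0 := by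
    simp [fixedPointQuadratic_eq_mul_of_vieta hsum hprod]
  have hP₂ : t * z₂ ^ 2 + (1 - t) * z₂ + 1 = 0 := by
    simp [fixedPointQuadratic_eq_mul_of_vieta hsum hprod]
  have h12 : (1 + z₁) * (1 + z₂) = 2 := mul_left_cancel₀ ht (by linear_combination hsum + hprod)
  have h12sq : (1 + z₁) ^ 2 * (1 + z₂) ^ 2 = 4 := by
    rw [← mul_pow, h12]
    norm_num
  apply mul_left_cancel₀ (mul_ne_zero (mul_ne_zero (two_ne_zero (α := K)) ht) ht)
  calc 2 * t * t * (2 * t * lam ^ 2 + (1 - 10 * t + t ^ 2) * lam + (-2 + 14 * t - 2 * t ^ 2))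
      = t * (((3 * t - 1) * lam + 2 * t ^ 2 - 8 * t + 2) * z₁ + ((t - 1) * lam - 4 * t + 2))
          * (((3 * t - 1) * lam + 2 * t ^ 2 - 8 * t + 2) * z₂ + ((t - 1) * lam - 4 * t + 2)) := by
        rw [mul_assoc t, mul_linear_mul_linear_of_vieta hsum hprod]
        ring
    _ = t * (t * (1 + z₁) ^ 2 * (lam - multiplier t z₁))
          * (t * (1 + z₂) ^ 2 * (lam - multiplier t z₂)) := by
        rw [mul_sub_multiplier hP₁ (one_add_ne_zero_of_fixedPointQuadratic ht hP₁),
          mul_sub_multiplier hP₂ (one_add_ne_zero_of_fixedPointQuadratic ht hP₂)]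
    _ = 2 * t * t * (2 * t * (lam - multiplier t z₁) * (lam - multiplier t z₂)) := by
        linear_combination t ^ 3 * (lam - multiplier t z₁) * (lam - multiplier t z₂) * h12sq

end Algebra

theorem deriv_eq_multiplier {𝕜 : Type*} [NontriviallyNormedField 𝕜] (t : 𝕜) {z : 𝕜}
    (hz : 1 + z ≠ 0) :
    deriv (fun w : 𝕜 => t * w ^ 2 * (1 - w) / (1 + w)) z = multiplier t z := by
  have hderiv := (((hasDerivAt_pow 2 z).const_mul t).mul
    ((hasDerivAt_id' z).const_sub 1)).div ((hasDerivAt_id' z).const_add 1) hz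
  rw [HasDerivAt.deriv (f := fun w : 𝕜 => t * w ^ 2 * (1 - w) / (1 + w)) hderiv, multiplier,
    Pi.mul_apply]
  field_simp
  ring

/-- For t ≠ 0, the roots λ of 2tλ² + (1-10t+t²)λ + (-2+14t-2t²) = 0 are
exactly the multipliers λ = f_t'(z) at the finite fixed points z ≠ 0 of
f_t(z) = t z²(1-z)/(1+z). -/
theorem multiplier_resultant_f (t lam : ℂ) (ht : t ≠ 0) :
    (2 * t * lam ^ 2 + (1 - 10 * t + t ^ 2) * lam + (-2 + 14 * t - 2 * t ^ 2) = 0)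
    ↔ ∃ z : ℂ, z ≠ 0 ∧ z ≠ -1 ∧
        t * z ^ 2 * (1 - z) / (1 + z) = z ∧
        deriv (fun w : ℂ => t * w ^ 2 * (1 - w) / (1 + w)) z = lam := by
  obtain ⟨z₁, z₂, hsum, hprod⟩ := exists_vieta_roots_fixedPointQuadratic ht
  have hroots (z : ℂ) : t * z ^ 2 + (1 - t) * z + 1 = 0 ↔ z = z₁ ∨ z = z₂ := by
    simp [fixedPointQuadratic_eq_mul_of_vieta hsum hprod, ht, sub_eq_zero]
  have hfixed (z : ℂ) : (z ≠ 0 ∧ z ≠ -1 ∧ t * z ^ 2 * (1 - z) / (1 + z) = z ∧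
      deriv (fun w : ℂ => t * w ^ 2 * (1 - w) / (1 + w)) z = lam) ↔
      (z = z₁ ∨ z = z₂) ∧ multiplier t z = lam := by
    rw [← and_assoc, ← and_assoc, and_assoc (a := z ≠ 0), isFixedPt_iff_fixedPointQuadratic ht,
      ← hroots]
    exact and_congr_right fun hP => by
      rw [deriv_eq_multiplier t (one_add_ne_zero_of_fixedPointQuadratic ht hP)]
  simp_rw [hfixed, or_and_right, exists_or, exists_eq_left,
    multiplierQuadratic_eq_of_vieta ht hsum hprod, mul_eq_zero, sub_eq_zero, eq_comm (a := lam)]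
  simp [ht]
end

section
/- The resultant with respect to λ of R_f(t,λ) = -2+14t-2t^2 + (1-10t+t^2)λ + 2tλ^2 and R_P(c,λ) = 9+2c - (c+6)λ + λ^2 equals (up to a nonzero constant factor) (1 + 2t + t^2 + 2tc)^2; consequently the multipliers agree for all fixed points iff c = -(t + 2 + 1/t)/2. -/
/-!
The Sylvester resultant of the two multiplier quadratics is the perfect square
`((t + 1) ^ 2 + 2 * t * c) ^ 2`, which is a polynomial identity; and for `t ≠ 0`
the base `(t + 1) ^ 2 + 2 * t * c = t * (t + 2 + 1 / t + 2 * c)` vanishes exactly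
when `c = -(t + 2 + 1 / t) / 2`.
-/

/-- The resultant of two quadratics a₂λ² + a₁λ + a₀ and b₂λ² + b₁λ + b₀
with respect to λ (Sylvester formula). -/
def res2 (a₂ a₁ a₀ b₂ b₁ b₀ : ℂ) : ℂ :=
  (a₂ * b₀ - a₀ * b₂) ^ 2 - (a₂ * b₁ - a₁ * b₂) * (a₁ * b₀ - a₀ * b₁)

lemma res2_multiplier_quadratics (t c : ℂ) :
    res2 (2 * t) (1 - 10 * t + t ^ 2) (-2 + 14 * t - 2 * t ^ 2)
        1 (-(c + 6)) (9 + 2 * c)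
      = (1 + 2 * t + t ^ 2 + 2 * t * c) ^ 2 := by
  unfold res2
  ring

lemma one_add_two_mul_add_sq_add_two_mul_mul_eq_zero_iff {K : Type*} [Field K] [NeZero (2 : K)]
    {t c : K} (ht : t ≠ 0) :
    1 + 2 * t + t ^ 2 + 2 * t * c = 0 ↔ c = -(t + 2 + 1 / t) / 2 := by
  have hfactor : 1 + 2 * t + t ^ 2 + 2 * t * c = 2 * t * (c + (t + 2 + 1 / t) / 2) := by
    field_simp
    ring
  rw [hfactor, mul_eq_zero, or_iff_right (mul_ne_zero two_ne_zero ht), add_eq_zero_iff_eq_neg,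
    neg_div]

/-- The resultant (w.r.t. λ) of R_f(t,λ) = -2+14t-2t² + (1-10t+t²)λ + 2tλ²
and R_P(c,λ) = 9+2c - (c+6)λ + λ² equals, up to a nonzero constant factor,
(1 + 2t + t² + 2tc)²; consequently, for t ≠ 0 it vanishes iff
c = -(t + 2 + 1/t)/2. -/
theorem resultant_identity :
    (∃ k : ℂ, k ≠ 0 ∧ ∀ t c : ℂ,
      res2 (2 * t) (1 - 10 * t + t ^ 2) (-2 + 14 * t - 2 * t ^ 2)
        1 (-(c + 6)) (9 + 2 * c)
      = k * (1 + 2 * t + t ^ 2 + 2 * t * c) ^ 2) ∧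
    ∀ t c : ℂ, t ≠ 0 →
      (res2 (2 * t) (1 - 10 * t + t ^ 2) (-2 + 14 * t - 2 * t ^ 2)
        1 (-(c + 6)) (9 + 2 * c) = 0 ↔ c = -(t + 2 + 1 / t) / 2) := by
  refine ⟨⟨1, one_ne_zero, fun t c => by rw [res2_multiplier_quadratics, one_mul]⟩, ?_⟩
  intro t c ht
  rw [res2_multiplier_quadratics, sq_eq_zero_iff,
    one_add_two_mul_add_sq_add_two_mul_mul_eq_zero_iff ht]
end
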